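/- arXiv:2005.07171 — 2 statements merged into one kernel-verified Lean document; each statement's English description precedes it below -/
import Mathlib

section
/- Let a, b, d ∈ ℝ with a, b, d ≥ 0 and a + 2b + d = 1, and let P be the 4×4 real matrix with rows (a,b,b,d), (b,a,d,b), (b,d,a,b), (d,b,b,a) (a Kimura 2-parameter Markov matrix). Then there exist β, δ ≥ 0 such that P = exp(Q), where Q is the 4×4 matrix with rows (α,β,β,δ), (β,α,δ,β), (β,δ,α,β), (δ,β,β,α) and α = −(2β+δ) (a Kimura 2-parameter rate matrix), if and only if a − d > 0 and (a − d)² ≤ a − 2b + d ≤ 1. -/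
/-!
The columns of the Hadamard matrix `!![1,1,1,1; 1,1,-1,-1; 1,-1,1,-1; 1,-1,-1,1]` are common
eigenvectors of all K2P matrices, so `P = exp Q` is equivalent to equality of the eigenvalues of
`P` with the exponentials of those of `Q`. For the rate matrix with parameters `β, δ` these
equations read `a + 2b + d = 1`, `a - d = exp (-2(β + δ))` and `a - 2b + d = exp (-4β)`, and they
have a solution with `β, δ ≥ 0` exactly when `0 < a - d` and `(a - d)² ≤ a - 2b + d ≤ 1`.
-/

open Matrix

section Algebra

variable {R : Type*}

def k2pMatrix (a b d : R) : Matrix (Fin 4) (Fin 4) R :=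
  !![a, b, b, d; b, a, d, b; b, d, a, b; d, b, b, a]

def k2pEigenvalues [Ring R] (a b d : R) : Fin 4 → R :=
  ![a + 2 * b + d, a - d, a - d, a - 2 * b + d]

def hadamard4 [Ring R] : Matrix (Fin 4) (Fin 4) R :=
  !![1, 1, 1, 1; 1, 1, -1, -1; 1, -1, 1, -1; 1, -1, -1, 1]

lemma k2pMatrix_mul_hadamard4 [CommRing R] (a b d : R) :
    k2pMatrix a b d * hadamard4 = hadamard4 * diagonal (k2pEigenvalues a b d) := by
  ext i j
  fin_cases i <;> fin_cases j <;>
    simp [k2pMatrix, k2pEigenvalues, hadamard4, mul_apply, Fin.sum_univ_four] <;> ring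

variable [Field R] [NeZero (4 : R)]

lemma hadamard4_mul_smul_hadamard4 :
    (hadamard4 : Matrix (Fin 4) (Fin 4) R) * ((4 : R)⁻¹ • hadamard4) = 1 := by
  have h4 : (4 : R) ≠ 0 := NeZero.ne 4
  ext i j
  fin_cases i <;> fin_cases j <;>
    simp [hadamard4, mul_apply, Fin.sum_univ_four] <;> field_simp <;> ring

lemma isUnit_det_hadamard4 : IsUnit (hadamard4 : Matrix (Fin 4) (Fin 4) R).det :=
  isUnit_det_of_right_inverse hadamard4_mul_smul_hadamard4

lemma k2pMatrix_eq_conj_diagonal (a b d : R) :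
    k2pMatrix a b d = hadamard4 * diagonal (k2pEigenvalues a b d) * hadamard4⁻¹ := by
  rw [← k2pMatrix_mul_hadamard4, mul_nonsing_inv_cancel_right _ _ isUnit_det_hadamard4]

lemma conj_hadamard4_injective :
    Function.Injective fun A : Matrix (Fin 4) (Fin 4) R ↦ hadamard4 * A * hadamard4⁻¹ := by
  refine Function.LeftInverse.injective (g := fun A ↦ hadamard4⁻¹ * A * hadamard4) fun A ↦ ?_
  dsimp only
  rw [Matrix.mul_assoc hadamard4, nonsing_inv_mul_cancel_left _ _ isUnit_det_hadamard4,
    nonsing_inv_mul_cancel_right _ _ isUnit_det_hadamard4]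

end Algebra

lemma exp_k2pMatrix (a b d : ℝ) :
    NormedSpace.exp (k2pMatrix a b d) =
      hadamard4 * diagonal (Real.exp ∘ k2pEigenvalues a b d) * hadamard4⁻¹ := by
  have hunit : IsUnit (hadamard4 : Matrix (Fin 4) (Fin 4) ℝ) :=
    (isUnit_iff_isUnit_det _).2 isUnit_det_hadamard4
  rw [k2pMatrix_eq_conj_diagonal, exp_conj _ _ hunit, exp_diagonal, Pi.exp_def,
    Real.exp_eq_exp_ℝ]
  rfl

lemma k2pMatrix_eq_exp_k2pMatrix_iff (a b d α β δ : ℝ) :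
    k2pMatrix a b d = NormedSpace.exp (k2pMatrix α β δ) ↔
      a + 2 * b + d = Real.exp (α + 2 * β + δ) ∧ a - d = Real.exp (α - δ) ∧
        a - 2 * b + d = Real.exp (α - 2 * β + δ) := by
  rw [k2pMatrix_eq_conj_diagonal, exp_k2pMatrix, conj_hadamard4_injective.eq_iff,
    diagonal_injective.eq_iff]
  simp [k2pEigenvalues, funext_iff, Fin.forall_fin_succ]

lemma k2pMatrix_eq_exp_rateMatrix_iff {a b d : ℝ} (hsum : a + 2 * b + d = 1) (β δ : ℝ) :
    k2pMatrix a b d = NormedSpace.exp (k2pMatrix (-(2 * β + δ)) β δ) ↔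
      a - d = Real.exp (-2 * (β + δ)) ∧ a - 2 * b + d = Real.exp (-4 * β) := by
  rw [k2pMatrix_eq_exp_k2pMatrix_iff, hsum, show -(2 * β + δ) + 2 * β + δ = 0 by ring,
    show -(2 * β + δ) - δ = -2 * (β + δ) by ring, show -(2 * β + δ) - 2 * β + δ = -4 * β by ring,
    Real.exp_zero]
  simp

lemma exists_nonneg_eq_exp_iff (x y : ℝ) :
    (∃ β δ : ℝ, 0 ≤ β ∧ 0 ≤ δ ∧ x = Real.exp (-2 * (β + δ)) ∧ y = Real.exp (-4 * β)) ↔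
      0 < x ∧ x ^ 2 ≤ y ∧ y ≤ 1 := by
  constructor
  · rintro ⟨β, δ, hβ, hδ, rfl, rfl⟩
    refine ⟨Real.exp_pos _, ?_, Real.exp_le_one_iff.2 (by linarith)⟩
    rw [← Real.exp_nat_mul]
    exact Real.exp_le_exp.2 (by push_cast; linarith)
  · rintro ⟨hx, hxy, hy⟩
    have hy0 : 0 < y := (pow_pos hx 2).trans_le hxy
    have hlog : 2 * Real.log x ≤ Real.log y := by
      simpa [Real.log_pow] using Real.log_le_log (pow_pos hx 2) hxy
    refine ⟨-Real.log y / 4, -Real.log x / 2 + Real.log y / 4, ?_, ?_, ?_, ?_⟩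
    · linarith [Real.log_nonpos hy0.le hy]
    · linarith
    · convert (Real.exp_log hx).symm using 2; ring
    · convert (Real.exp_log hy0).symm using 2; ring

theorem k2p_embeddable_iff_general (a b d : ℝ)
    (hsum : a + 2 * b + d = 1) :
    (∃ β δ : ℝ, 0 ≤ β ∧ 0 ≤ δ ∧
      !![a, b, b, d; b, a, d, b; b, d, a, b; d, b, b, a] =
        NormedSpace.exp
          !![-(2 * β + δ), β, β, δ;
             β, -(2 * β + δ), δ, β;
             β, δ, -(2 * β + δ), β;
             δ, β, β, -(2 * β + δ)]) ↔
    (0 < a - d ∧ (a - d) ^ 2 ≤ a - 2 * b + d ∧ a - 2 * b + d ≤ 1) := by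
  change (∃ β δ : ℝ, 0 ≤ β ∧ 0 ≤ δ ∧
    k2pMatrix a b d = NormedSpace.exp (k2pMatrix (-(2 * β + δ)) β δ)) ↔ _
  simp only [k2pMatrix_eq_exp_rateMatrix_iff hsum]
  exact exists_nonneg_eq_exp_iff _ _

/-- A Kimura 2-parameter Markov matrix is K2P embeddable, i.e. the matrix exponential of a
Kimura 2-parameter rate matrix, if and only if `a - d > 0` and
`(a - d)² ≤ a - 2b + d ≤ 1`. -/
theorem k2p_embeddable_iff (a b d : ℝ)
    (ha : 0 ≤ a) (hb : 0 ≤ b) (hd : 0 ≤ d) (hsum : a + 2 * b + d = 1) :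
    (∃ β δ : ℝ, 0 ≤ β ∧ 0 ≤ δ ∧
      !![a, b, b, d; b, a, d, b; b, d, a, b; d, b, b, a] =
        NormedSpace.exp
          !![-(2 * β + δ), β, β, δ;
             β, -(2 * β + δ), δ, β;
             β, δ, -(2 * β + δ), β;
             δ, β, β, -(2 * β + δ)]) ↔
    (0 < a - d ∧ (a - d) ^ 2 ≤ a - 2 * b + d ∧ a - 2 * b + d ≤ 1) :=
  k2p_embeddable_iff_general a b d hsum
end

section
/- Let G = ℤ/2 × ℤ/2 × ℤ/2, and for g, h ∈ G write ⟨g,h⟩ ∈ ℤ/2 for the sum of the coordinatewise products of g and h, and set ε(g,h) = 1 if ⟨g,h⟩ = 0 and ε(g,h) = −1 otherwise. Let f : G → ℝ satisfy f(g) ≥ 0 for all g and ∑_{g∈G} f(g) = 1, and let P be the G×G matrix with P_{g,h} = f(h + g) (a hachimoji 7-parameter Markov matrix). For g ∈ G set λ_g = ∑_{h∈G} ε(g,h)·f(h). Then there exists ψ : G → ℝ with ψ(g) ≥ 0 for all g ≠ 0 and ∑_{g∈G} ψ(g) = 0 such that P = exp(Q) for the matrix Q with Q_{g,h} = ψ(h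 + g) (a hachimoji 7-parameter rate matrix) if and only if λ_g > 0 for every g ∈ G and, for every nonzero g ∈ G, ∏_{h≠0, ⟨g,h⟩=0} λ_h ≥ ∏_{h : ⟨g,h⟩=1} λ_h. -/
/-- The group `ℤ/2 × ℤ/2 × ℤ/2` underlying the hachimoji models. -/
abbrev HachimojiGroup := ZMod 2 × ZMod 2 × ZMod 2

/-- The sum of the coordinatewise products of `g` and `h`, an element of `ℤ/2`. -/
def hachimojiPairing (g h : HachimojiGroup) : ZMod 2 :=
  g.1 * h.1 + g.2.1 * h.2.1 + g.2.2 * h.2.2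

/-- `ε(g,h) = (-1)^⟨g,h⟩`, the entries of the discrete Fourier transform matrix of
`ℤ/2 × ℤ/2 × ℤ/2`. -/
noncomputable def hachimojiEps (g h : HachimojiGroup) : ℝ :=
  if hachimojiPairing g h = 0 then 1 else -1

/-! The rows of `F = (ε(g,h))` are the characters of `G` and `F² = 8·1`, so `F` simultaneously
diagonalises all group-based matrices: `F · circ ψ = diag (F ψ) · F`. Hence
`exp (circ ψ) = circ f` exactly when `F f = exp (F ψ)`, i.e. `λ = exp ψ̂`. An embedding therefore
forces `λ > 0` and `ψ = ⅛ F (log λ)`; the constraint `∑ ψ = 0` becomes `log λ₀ = 0`, which holds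
because `λ₀ = ∑ f = 1`, and `8 ψ(g) = log ∏_{⟨g,h⟩=0} λ_h - log ∏_{⟨g,h⟩=1} λ_h`, whose sign is
the product inequality. -/

open Matrix

section CharacterMatrix

variable {ι A R : Type*}

def charMatrix [AddMonoid A] [Monoid R] (χ : ι → AddChar A R) : Matrix ι A R :=
  of fun i a => χ i a

variable [AddGroup A] [Fintype A]

theorem charMatrix_mul_circulant [CommRing R] [Fintype ι] [DecidableEq ι]
    (χ : ι → AddChar A R) (ψ : A → R) :
    charMatrix χ * circulant ψ = diagonal (charMatrix χ *ᵥ ψ) * charMatrix χ := by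
  ext i b
  rw [diagonal_mul, mul_apply, mulVec, dotProduct, Finset.sum_mul,
    ← Equiv.sum_comp (Equiv.addRight b)]
  refine Finset.sum_congr rfl fun a _ => ?_
  simp only [charMatrix, of_apply, circulant_apply, Equiv.coe_addRight, add_sub_cancel_right,
    AddChar.map_add_eq_mul]
  ring

variable [DecidableEq A] {𝔸 : Type*} [NormedCommRing 𝔸] [NormedAlgebra ℚ 𝔸] [CompleteSpace 𝔸]

theorem exp_circulant_eq_circulant_iff (χ : A → AddChar A 𝔸) (hχ : IsUnit (charMatrix χ))
    (ψ φ : A → 𝔸) :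
    NormedSpace.exp (circulant ψ) = circulant φ ↔
      charMatrix χ *ᵥ φ = NormedSpace.exp (charMatrix χ *ᵥ ψ) := by
  have hconj : ∀ v,
      circulant v = (charMatrix χ)⁻¹ * diagonal (charMatrix χ *ᵥ v) * charMatrix χ := fun v => by
    rw [mul_assoc, ← charMatrix_mul_circulant, ← mul_assoc,
      nonsing_inv_mul _ ((isUnit_iff_isUnit_det _).mp hχ), one_mul]
  rw [hconj ψ, hconj φ, exp_conj' _ _ hχ, exp_diagonal, hχ.mul_left_inj,
    (isUnit_nonsing_inv_iff.mpr hχ).mul_right_inj, diagonal_injective.eq_iff, eq_comm]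

end CharacterMatrix

theorem prod_filter_ne_zero_and {α M : Type*} [Zero α] [DecidableEq α] [CommMonoid M]
    {s : Finset α} (f : α → M) (hf : f 0 = 1) (p : α → Prop) [DecidablePred p] :
    ∏ a ∈ s.filter (fun a => a ≠ 0 ∧ p a), f a = ∏ a ∈ s.filter p, f a :=
  Finset.prod_subset (Finset.monotone_filter_right _ fun _ _ => And.right) fun a hpa ha => by
    obtain rfl : a = 0 := by simpa [Finset.mem_filter.mp hpa] using ha
    exact hf

theorem of_add_eq_circulant {A α : Type*} [Ring A] [CharP A 2] (ψ : A → α) :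
    of (fun a b => ψ (b + a)) = circulant ψ := by
  ext a b
  rw [of_apply, circulant_apply, CharTwo.sub_eq_add, add_comm]

section Hachimoji

local notation "G" => HachimojiGroup

theorem hachimojiPairing_comm (g h : G) : hachimojiPairing g h = hachimojiPairing h g := by
  unfold hachimojiPairing; ring

theorem hachimojiPairing_add_right (g h j : G) :
    hachimojiPairing g (h + j) = hachimojiPairing g h + hachimojiPairing g j := by
  unfold hachimojiPairing
  simp only [Prod.fst_add, Prod.snd_add]
  ring

theorem hachimojiPairing_zero_left (h : G) : hachimojiPairing 0 h = 0 := by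
  simp [hachimojiPairing]

theorem exists_hachimojiPairing_eq_one : ∀ g : G, g ≠ 0 → ∃ h, hachimojiPairing g h = 1 := by
  decide

theorem hachimojiEps_comm (g h : G) : hachimojiEps g h = hachimojiEps h g := by
  rw [hachimojiEps, hachimojiEps, hachimojiPairing_comm]

theorem hachimojiEps_zero_left (h : G) : hachimojiEps 0 h = 1 := by
  simp [hachimojiEps, hachimojiPairing_zero_left]

theorem hachimojiEps_add_right (g h j : G) :
    hachimojiEps g (h + j) = hachimojiEps g h * hachimojiEps g j := by
  have hcases : ∀ a : ZMod 2, a = 0 ∨ a = 1 := by decide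
  unfold hachimojiEps
  rw [hachimojiPairing_add_right]
  rcases hcases (hachimojiPairing g h) with h1 | h1 <;>
    rcases hcases (hachimojiPairing g j) with h2 | h2 <;> simp [h1, h2, CharTwo.add_self_eq_zero]

noncomputable def hachimojiChar (g : G) : AddChar G ℝ where
  toFun := hachimojiEps g
  map_zero_eq_one' := by rw [hachimojiEps_comm, hachimojiEps_zero_left]
  map_add_eq_mul' := hachimojiEps_add_right g

@[simp]
theorem hachimojiChar_apply (g h : G) : hachimojiChar g h = hachimojiEps g h := rfl

theorem hachimojiChar_eq_zero_iff (g : G) : hachimojiChar g = 0 ↔ g = 0 := by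
  refine ⟨fun hg => ?_, fun hg => ?_⟩
  · by_contra hne
    obtain ⟨h, hh⟩ := exists_hachimojiPairing_eq_one g hne
    have := DFunLike.congr_fun hg h
    norm_num [hachimojiEps, hh] at this
  · ext h
    simp [hg, hachimojiEps_zero_left]

theorem sum_hachimojiEps (g : G) : ∑ h, hachimojiEps g h = if g = 0 then 8 else 0 := by
  have := AddChar.sum_eq_ite (hachimojiChar g)
  simpa [hachimojiChar_eq_zero_iff] using this

noncomputable abbrev hachimojiFourier : Matrix G G ℝ := charMatrix hachimojiChar

theorem hachimojiFourier_apply (g h : G) : hachimojiFourier g h = hachimojiEps g h := rfl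

theorem hachimojiFourier_mul_self : hachimojiFourier * hachimojiFourier = (8 : ℝ) • 1 := by
  ext g h
  have hchar : ∀ k, hachimojiEps g k * hachimojiEps k h = hachimojiEps (g + h) k := fun k => by
    rw [hachimojiEps_comm (g + h), hachimojiEps_add_right, hachimojiEps_comm k g]
  simp_rw [mul_apply, hachimojiFourier_apply, hchar, sum_hachimojiEps, Matrix.smul_apply,
    one_apply]
  have hgh : g + h = 0 ↔ g = h := by rw [add_eq_zero_iff_eq_neg, CharTwo.neg_eq]
  simp [hgh]

theorem isUnit_hachimojiFourier : IsUnit hachimojiFourier :=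
  IsUnit.of_mul_eq_one ((8 : ℝ)⁻¹ • hachimojiFourier) <| by
    rw [Matrix.mul_smul, hachimojiFourier_mul_self, smul_smul, inv_mul_cancel₀ (by norm_num),
      one_smul]

theorem hachimojiFourier_mulVec_mulVec (v : G → ℝ) :
    hachimojiFourier *ᵥ (hachimojiFourier *ᵥ v) = (8 : ℝ) • v := by
  rw [mulVec_mulVec, hachimojiFourier_mul_self, smul_mulVec, one_mulVec]

theorem sum_eq_hachimojiFourier_mulVec_zero (v : G → ℝ) :
    ∑ g, v g = (hachimojiFourier *ᵥ v) 0 := by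
  simp [mulVec, dotProduct, hachimojiFourier_apply, hachimojiEps_zero_left]

theorem hachimojiFourier_mulVec_apply (v : G → ℝ) (g : G) :
    (hachimojiFourier *ᵥ v) g =
      ∑ h ∈ Finset.univ.filter (fun h => hachimojiPairing g h = 0), v h -
        ∑ h ∈ Finset.univ.filter (fun h => hachimojiPairing g h = 1), v h := by
  have hne : ∀ a : ZMod 2, a ≠ 0 ↔ a = 1 := by decide
  simp only [mulVec, dotProduct, hachimojiFourier_apply, hachimojiEps, ite_mul, one_mul,
    neg_one_mul, Finset.sum_ite, hne, Finset.sum_neg_distrib]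
  ring

theorem hachimojiFourier_mulVec_log_nonneg_iff (lam : G → ℝ) (hpos : ∀ g, 0 < lam g)
    (hlam0 : lam 0 = 1) (g : G) :
    0 ≤ (hachimojiFourier *ᵥ (Real.log ∘ lam)) g ↔
      ∏ h ∈ Finset.univ.filter (fun h => h ≠ 0 ∧ hachimojiPairing g h = 0), lam h ≥
        ∏ h ∈ Finset.univ.filter (fun h => hachimojiPairing g h = 1), lam h := by
  have hlog : ∀ s : Finset G, ∑ h ∈ s, Real.log (lam h) = Real.log (∏ h ∈ s, lam h) :=
    fun s => (Real.log_prod fun h _ => (hpos h).ne').symm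
  rw [prod_filter_ne_zero_and lam hlam0, hachimojiFourier_mulVec_apply, Function.comp_def,
    hlog, hlog, sub_nonneg, ge_iff_le,
    Real.log_le_log_iff (Finset.prod_pos fun h _ => hpos h) (Finset.prod_pos fun h _ => hpos h)]

theorem exists_rate_eq_exp_hachimojiFourier_iff (lam : G → ℝ) (hlam0 : lam 0 = 1) :
    (∃ ψ : G → ℝ, (∀ g, g ≠ 0 → 0 ≤ ψ g) ∧ ∑ g, ψ g = 0 ∧
        lam = Real.exp ∘ (hachimojiFourier *ᵥ ψ)) ↔
      (∀ g, 0 < lam g) ∧ ∀ g, g ≠ 0 → 0 ≤ (hachimojiFourier *ᵥ (Real.log ∘ lam)) g := by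
  constructor
  · rintro ⟨ψ, hψ, -, rfl⟩
    refine ⟨fun g => Real.exp_pos _, fun g hg => ?_⟩
    have hlog : Real.log ∘ Real.exp ∘ (hachimojiFourier *ᵥ ψ) = hachimojiFourier *ᵥ ψ := by
      ext; simp
    rw [hlog, hachimojiFourier_mulVec_mulVec, Pi.smul_apply, smul_eq_mul]
    exact mul_nonneg (by norm_num) (hψ g hg)
  · rintro ⟨hpos, hnonneg⟩
    have hinv : hachimojiFourier *ᵥ ((8 : ℝ)⁻¹ • hachimojiFourier *ᵥ (Real.log ∘ lam)) =
        Real.log ∘ lam := by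
      rw [mulVec_smul, hachimojiFourier_mulVec_mulVec, smul_smul, inv_mul_cancel₀ (by norm_num),
        one_smul]
    refine ⟨(8 : ℝ)⁻¹ • hachimojiFourier *ᵥ (Real.log ∘ lam), fun g hg => ?_, ?_, ?_⟩
    · exact mul_nonneg (by norm_num) (hnonneg g hg)
    · rw [sum_eq_hachimojiFourier_mulVec_zero, hinv, Function.comp_apply, hlam0, Real.log_one]
    · rw [hinv]
      ext g
      exact (Real.exp_log (hpos g)).symm

end Hachimoji

theorem h7p_embeddable_iff_general (f : HachimojiGroup → ℝ)
    (hfsum : ∑ g : HachimojiGroup, f g = 1)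
    (P : Matrix HachimojiGroup HachimojiGroup ℝ)
    (hP : ∀ g h : HachimojiGroup, P g h = f (h + g))
    (lam : HachimojiGroup → ℝ)
    (hlam : ∀ g : HachimojiGroup, lam g = ∑ h : HachimojiGroup, hachimojiEps g h * f h) :
    (∃ ψ : HachimojiGroup → ℝ, (∀ g : HachimojiGroup, g ≠ 0 → 0 ≤ ψ g) ∧
      (∑ g : HachimojiGroup, ψ g = 0) ∧
      P = NormedSpace.exp (Matrix.of fun g h : HachimojiGroup => ψ (h + g))) ↔
    ((∀ g : HachimojiGroup, 0 < lam g) ∧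
      ∀ g : HachimojiGroup, g ≠ 0 →
        ∏ h ∈ Finset.univ.filter
            (fun h : HachimojiGroup => h ≠ 0 ∧ hachimojiPairing g h = 0), lam h ≥
        ∏ h ∈ Finset.univ.filter
            (fun h : HachimojiGroup => hachimojiPairing g h = 1), lam h) := by
  have hlamf : lam = hachimojiFourier *ᵥ f := funext hlam
  have hlam0 : lam 0 = 1 := by rw [hlamf, ← sum_eq_hachimojiFourier_mulVec_zero, hfsum]
  have hPf : P = circulant f := by rw [← of_add_eq_circulant]; ext g h; exact hP g h
  have hembed : ∀ ψ : HachimojiGroup → ℝ, P = NormedSpace.exp (of fun g h => ψ (h + g)) ↔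
      lam = Real.exp ∘ (hachimojiFourier *ᵥ ψ) := fun ψ => by
    rw [hPf, of_add_eq_circulant, eq_comm,
      exp_circulant_eq_circulant_iff hachimojiChar isUnit_hachimojiFourier, ← hlamf,
      Pi.exp_def, Real.exp_eq_exp_ℝ, Function.comp_def]
  simp_rw [hembed, exists_rate_eq_exp_hachimojiFourier_iff lam hlam0]
  exact and_congr_right fun hpos =>
    forall₂_congr fun g _ => hachimojiFourier_mulVec_log_nonneg_iff lam hpos hlam0 g

/-- A hachimoji 7-parameter Markov matrix `P` with `P g h = f (h + g)` is H7P embeddable,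
i.e. the matrix exponential of a hachimoji 7-parameter rate matrix, if and only if all its
eigenvalues `λ_g = ∑ h, ε(g,h) f(h)` are positive and, for every nonzero `g`,
`∏_{h ≠ 0, ⟨g,h⟩ = 0} λ_h ≥ ∏_{⟨g,h⟩ = 1} λ_h`. -/
theorem h7p_embeddable_iff (f : HachimojiGroup → ℝ)
    (hfnonneg : ∀ g : HachimojiGroup, 0 ≤ f g) (hfsum : ∑ g : HachimojiGroup, f g = 1)
    (P : Matrix HachimojiGroup HachimojiGroup ℝ)
    (hP : ∀ g h : HachimojiGroup, P g h = f (h + g))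
    (lam : HachimojiGroup → ℝ)
    (hlam : ∀ g : HachimojiGroup, lam g = ∑ h : HachimojiGroup, hachimojiEps g h * f h) :
    (∃ ψ : HachimojiGroup → ℝ, (∀ g : HachimojiGroup, g ≠ 0 → 0 ≤ ψ g) ∧
      (∑ g : HachimojiGroup, ψ g = 0) ∧
      P = NormedSpace.exp (Matrix.of fun g h : HachimojiGroup => ψ (h + g))) ↔
    ((∀ g : HachimojiGroup, 0 < lam g) ∧
      ∀ g : HachimojiGroup, g ≠ 0 →
        ∏ h ∈ Finset.univ.filter
            (fun h : HachimojiGroup => h ≠ 0 ∧ hachimojiPairing g h = 0), lam h ≥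
        ∏ h ∈ Finset.univ.filter
            (fun h : HachimojiGroup => hachimojiPairing g h = 1), lam h) :=
  h7p_embeddable_iff_general f hfsum P hP lam hlam
end
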